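/- arXiv:1706.01195 — 2 statements merged into one kernel-verified Lean document; each statement's English description precedes it below -/
import Mathlib

section
/- Let A ∈ ℝ^{n×n}, B ∈ ℝ^{n×m}, let D ⊆ ℝ^n be a convex disturbance set, let U ⊆ ℝ^m be the admissible control set, let α ∈ [0,1), let κ ≥ 1 be an integer, and let M₀, …, M_{κ-1} ∈ ℝ^{m×n}. For i = 0, …, κ define the matrix P_i := A^i + Σ_{j=0}^{i-1} A^{i-1-j} B M_j (so P_0 = I). Let x̄ ∈ ℝ^n and ū ∈ ℝ^m satisfy A x̄ + B ū = x̄. Assume: (a) P_κ d ∈ α·D for every d ∈ D (i.e., P_κ D ⊆ αD), and (b) for every d₀, …, d_{κ-1} ∈ D, the control ū + (1-α)^{-1} Σ_{i=0}^{κ-1} M_i d_i belongs to U. Then the set Ω := { x̄ + (1-α)^{-1} Σ_{i=0}^{κ-1} P_i d_i : d₀, …, d_{κ-1} ∈ D } is robust control invariant for the system y⁺ = A y + B u + w with disturbance set D and control set U; specifically, for every y ∈ Ω there exists u ∈ U such that A y + B u + d ∈ Ω for all d ∈ D. -/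
/-!
Write `Y(d) = ∑_{i<κ} P_i d_i` and `V(d) = ∑_{i<κ} M_i d_i`. Since `P_{i+1} = A P_i + B M_i`,
feeding the control `ū + (1-α)⁻¹ V(d)` at the state `x̄ + (1-α)⁻¹ Y(d)` shifts the
disturbance sequence by one slot: the successor is `x̄ + (1-α)⁻¹ Y(d')` with
`d' = (c, d_0, …, d_{κ-2})` and `c = (1-α) w + P_κ d_{κ-1}`. By (a), `P_κ d_{κ-1} = α e`
with `e ∈ D`, so `c` is a convex combination of `w, e ∈ D`; admissibility of the control
is (b).
-/

open Finset Matrix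

def seqCons {V : Type*} (c : V) (d : ℕ → V) : ℕ → V
  | 0 => c
  | i + 1 => d i

section ResponseMatrix

variable {n m R : Type*} [Fintype n] [DecidableEq n] [Fintype m] [Semiring R]

def responseMatrix (A : Matrix n n R) (B : Matrix n m R) (M : ℕ → Matrix m n R) (i : ℕ) :
    Matrix n n R :=
  A ^ i + ∑ j ∈ range i, A ^ (i - 1 - j) * B * M j

variable (A : Matrix n n R) (B : Matrix n m R) (M : ℕ → Matrix m n R)

@[simp]
theorem responseMatrix_zero : responseMatrix A B M 0 = 1 := by
  simp [responseMatrix]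

theorem responseMatrix_succ (i : ℕ) :
    responseMatrix A B M (i + 1) = A * responseMatrix A B M i + B * M i := by
  have hpow : ∀ j ∈ range i,
      A ^ (i + 1 - 1 - j) * B * M j = A * (A ^ (i - 1 - j) * B * M j) := by
    intro j hj
    rw [show i + 1 - 1 - j = i - 1 - j + 1 by grind, pow_succ', Matrix.mul_assoc,
      Matrix.mul_assoc, Matrix.mul_assoc]
  rw [responseMatrix, responseMatrix, sum_range_succ, sum_congr rfl hpow,
    show i + 1 - 1 - i = 0 by omega, pow_zero, Matrix.one_mul, pow_succ', mul_add, mul_sum]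
  abel

theorem responseMatrix_shift (k : ℕ) (d : ℕ → n → R) (v : n → R) :
    A *ᵥ (∑ i ∈ range (k + 1), responseMatrix A B M i *ᵥ d i)
        + B *ᵥ (∑ i ∈ range (k + 1), M i *ᵥ d i) + v
      = ∑ i ∈ range (k + 1),
          responseMatrix A B M i *ᵥ seqCons (v + responseMatrix A B M (k + 1) *ᵥ d k) d i := by
  have hstep : ∀ i, A *ᵥ (responseMatrix A B M i *ᵥ d i) + B *ᵥ (M i *ᵥ d i)
      = responseMatrix A B M (i + 1) *ᵥ d i := by
    intro i
    rw [mulVec_mulVec, mulVec_mulVec, ← add_mulVec, responseMatrix_succ]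
  rw [mulVec_sum, mulVec_sum, ← sum_add_distrib, sum_congr rfl fun i _ => hstep i,
    sum_range_succ, sum_range_succ']
  simp only [seqCons, responseMatrix_zero, one_mulVec]
  abel

end ResponseMatrix

theorem seqCons_mem_of_forall_lt_mem {V : Type*} {D : Set V} {c : V} {d : ℕ → V} {k : ℕ}
    (hc : c ∈ D) (hd : ∀ i < k, d i ∈ D) : ∀ i < k + 1, seqCons c d i ∈ D
  | 0, _ => hc
  | i + 1, hi => hd i (by omega)

open Finset Pointwise in
/-- Raković et al. RCI parametrization: under conditions
(a) `P_κ D ⊆ α D` and (b) admissibility of the parametrized controls, the set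
`Ω = x̄ ⊕ (1-α)⁻¹ ⊕_{i<κ} P_i D` is robust control invariant for
`y⁺ = A y + B u + w` with disturbance set `D` and control set `U`. -/
theorem stmt_6 {n m : ℕ}
    (A : Matrix (Fin n) (Fin n) ℝ) (B : Matrix (Fin n) (Fin m) ℝ)
    (D : Set (Fin n → ℝ)) (hD : Convex ℝ D)
    (U : Set (Fin m → ℝ))
    (α : ℝ) (hα0 : 0 ≤ α) (hα1 : α < 1)
    (κ : ℕ) (hκ : 1 ≤ κ)
    (M : ℕ → Matrix (Fin m) (Fin n) ℝ)
    (P : ℕ → Matrix (Fin n) (Fin n) ℝ)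
    (hP : ∀ i, P i = A ^ i + ∑ j ∈ Finset.range i, A ^ (i - 1 - j) * B * M j)
    (xbar : Fin n → ℝ) (ubar : Fin m → ℝ)
    (hfix : A.mulVec xbar + B.mulVec ubar = xbar)
    (ha : ∀ d ∈ D, (P κ).mulVec d ∈ α • D)
    (hb : ∀ d : ℕ → (Fin n → ℝ), (∀ i < κ, d i ∈ D) →
      ubar + (1 - α)⁻¹ • ∑ i ∈ Finset.range κ, (M i).mulVec (d i) ∈ U)
    (Ω : Set (Fin n → ℝ))
    (hΩ : Ω = {y | ∃ d : ℕ → (Fin n → ℝ), (∀ i < κ, d i ∈ D) ∧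
      y = xbar + (1 - α)⁻¹ • ∑ i ∈ Finset.range κ, (P i).mulVec (d i)}) :
    ∀ y ∈ Ω, ∃ u ∈ U, ∀ d ∈ D, A.mulVec y + B.mulVec u + d ∈ Ω := by
  obtain rfl : P = responseMatrix A B M := funext hP
  obtain ⟨k, rfl⟩ : ∃ k, κ = k + 1 := ⟨κ - 1, by omega⟩
  subst hΩ
  rintro _ ⟨d, hd, rfl⟩
  refine ⟨_, hb d hd, fun w hw => ?_⟩
  obtain ⟨e, he, hPe⟩ := ha (d k) (hd k k.lt_succ_self)
  have hc : (1 - α) • w + α • e ∈ D := hD hw he (by linarith) hα0 (by ring)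
  refine ⟨_, seqCons_mem_of_forall_lt_mem hc fun i hi => hd i (by omega), ?_⟩
  rw [show α • e = _ from hPe, ← responseMatrix_shift]
  have h1α : 1 - α ≠ 0 := by linarith
  rw [mulVec_add, mulVec_add, mulVec_smul, mulVec_smul, smul_add, smul_add, inv_smul_smul₀ h1α]
  linear_combination (norm := module) hfix
end

section
/- Consider a platoon of N+1 vehicles (N ≥ 1) of common length l > 0 with sampling time Δτ > 0, actual control sets [u_{i,min}, u_{i,max}] for each i ∈ {0,…,N}, actual disturbance rectangles [w_{i,x,min}, w_{i,x,max}] × [w_{i,v,min}, w_{i,v,max}], envelope sets 𝕊_i = { (x̃, ṽ) ∈ ℝ² : i·l + (i-1)(L-Nl)/N ≤ x̃ ≤ i·l + i(L-Nl)/N } for i ∈ {1,…,N}, and 𝕊₀ = [v_{0,min}, v_{0,max}]. Suppose: (i) for each i ∈ {1,…,N} there is a set Ω_i ⊆ 𝕊_i and a policy μ_i : Ω_i → Ũ_i (with Ũ_i ⊆ ℝ an interval of relative controls) such that for all (x̃_i, ṽ_i) ∈ Ω_i and all (w̃_x, w̃_v) in the relative disturbance rectangle W̃_i, the successor (x̃_i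 + ṽ_i Δτ + μ_i(x̃_i, ṽ_i) Δτ²/2 + w̃_x, ṽ_i + μ_i(x̃_i, ṽ_i) Δτ + w̃_v) lies in Ω_i; (ii) there is Ω₀ ⊆ 𝕊₀ and μ₀ : Ω₀ → U₀ ⊆ [u_{0,min}, u_{0,max}] such that v₀ + μ₀(v₀) Δτ + w ∈ Ω₀ for all v₀ ∈ Ω₀ and w ∈ [w_{0,v,min}, w_{0,v,max}]; (iii) for every u₀ ∈ U₀ and every ũ_i ∈ Ũ_i, the actual input u_i = u₀ - ũ_i lies in [u_{i,min}, u_{i,max}]; (iv) for every admissible actual disturbances w₀ = (w_{0,x}, w_{0,v}) and w_i = (w_{i,x}, w_{i,v}) of the leader and vehicle i, the relative disturbance (w_{0,x} - w_{i,x}, w_{0,v} - w_{i,v}) lies in W̃_i. Then for every initial platoon state with (x̃_i(0), ṽ_i(0)) ∈ Ω_i for all i ∈ {1,…,N} and v₀(0) ∈ Ω₀, and every sequence of admissible actual disturbances, the closed loop under the distributed policy (u₀(k) = μ₀(v₀(k)), u_i(k) = u₀(k) - μ_i(x̃_i(k), ṽ_i(k))) applied to the relative dynamics x̃_i⁺ =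 x̃_i + ṽ_i Δτ + (u₀-u_i) Δτ²/2 + w_{0,x} - w_{i,x}, ṽ_i⁺ = ṽ_i + (u₀-u_i) Δτ + w_{0,v} - w_{i,v}, v₀⁺ = v₀ + u₀ Δτ + w_{0,v} satisfies, for all times k: all inputs u_i(k) ∈ [u_{i,min}, u_{i,max}]; the spacings x̃_i(k) - x̃_{i-1}(k) ≥ l (with x̃₀ = 0); the platoon length x̃_N(k) ≤ L; and the platoon velocity v₀(k) ∈ [v_{0,min}, v_{0,max}]. -/
/-!
The leader's input cancels in the relative input `u₀ - u_i = μ_i(x̃_i, ṽ_i)`, so each follower's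
relative state evolves autonomously under `μ_i` and a disturbance in `W̃_i`; by robust invariance
it stays in `Ω_i ⊆ 𝕊_i` forever, and likewise the leader's speed stays in `Ω₀`. The envelopes are
stacked so that the lower edge of `𝕊_i` lies exactly `l` above the upper edge of `𝕊_{i-1}`
(with `𝕊₀`'s upper edge `0 = x̃₀`), and the upper edge of `𝕊_N` is `L`.
-/

namespace Platoon

theorem mem_of_robustInvariant {α ω : Type*} {S : Set α} {W : Set ω} {f : α → ω → α}
    (hf : ∀ s ∈ S, ∀ w ∈ W, f s w ∈ S) {x : ℕ → α} {w : ℕ → ω} (hw : ∀ k, w k ∈ W)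
    (hx : ∀ k, x (k + 1) = f (x k) (w k)) (h0 : x 0 ∈ S) : ∀ k, x k ∈ S
  | 0 => h0
  | k + 1 => hx k ▸ hf _ (mem_of_robustInvariant hf hw hx h0 k) _ (hw k)

noncomputable def envelopeLower (N : ℕ) (l L : ℝ) (i : ℕ) : ℝ := i * l + (i - 1) * (L - N * l) / N

noncomputable def envelopeUpper (N : ℕ) (l L : ℝ) (i : ℕ) : ℝ := i * l + i * (L - N * l) / N

variable {N : ℕ} {l L : ℝ}

@[simp]
theorem envelopeUpper_zero : envelopeUpper N l L 0 = 0 := by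
  simp [envelopeUpper]

theorem envelopeLower_succ (j : ℕ) : envelopeLower N l L (j + 1) = envelopeUpper N l L j + l := by
  simp only [envelopeLower, envelopeUpper]
  push_cast
  ring

theorem envelopeUpper_self (hN : N ≠ 0) : envelopeUpper N l L N = L := by
  simp only [envelopeUpper]
  field_simp
  ring

end Platoon

open Platoon

theorem stmt_10_general
    (N : ℕ) (hN : 1 ≤ N) (l : ℝ) (Δτ : ℝ) (L : ℝ)
    (umin umax wxmin wxmax wvmin wvmax : ℕ → ℝ)
    (v0min v0max : ℝ)
    -- invariant sets and policies
    (Ω : ℕ → Set (ℝ × ℝ)) (μ : ℕ → ℝ × ℝ → ℝ)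
    (Ut : ℕ → Set ℝ)      -- relative control sets Ũ_i
    (Wt : ℕ → Set (ℝ × ℝ)) -- relative disturbance rectangles W̃_i
    (Ω₀ : Set ℝ) (μ₀ : ℝ → ℝ) (U₀ : Set ℝ)
    -- (i) follower invariance within the envelopes
    (henv : ∀ i, 1 ≤ i → i ≤ N → Ω i ⊆
      {s : ℝ × ℝ | (i : ℝ) * l + ((i : ℝ) - 1) * (L - N * l) / N ≤ s.1 ∧
        s.1 ≤ (i : ℝ) * l + (i : ℝ) * (L - N * l) / N})
    (hμU : ∀ i, 1 ≤ i → i ≤ N → ∀ s ∈ Ω i, μ i s ∈ Ut i)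
    (hinv : ∀ i, 1 ≤ i → i ≤ N → ∀ s ∈ Ω i, ∀ wt ∈ Wt i,
      (s.1 + s.2 * Δτ + μ i s * Δτ ^ 2 / 2 + wt.1,
       s.2 + μ i s * Δτ + wt.2) ∈ Ω i)
    -- (ii) leader invariance within the speed range
    (hΩ₀S : Ω₀ ⊆ Set.Icc v0min v0max)
    (hU₀ : U₀ ⊆ Set.Icc (umin 0) (umax 0))
    (hμ₀U : ∀ v ∈ Ω₀, μ₀ v ∈ U₀)
    (hinv₀ : ∀ v ∈ Ω₀, ∀ w ∈ Set.Icc (wvmin 0) (wvmax 0),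
      v + μ₀ v * Δτ + w ∈ Ω₀)
    -- (iii) actual inputs of the followers are admissible
    (hctr : ∀ u₀ ∈ U₀, ∀ i, 1 ≤ i → i ≤ N → ∀ ut ∈ Ut i,
      u₀ - ut ∈ Set.Icc (umin i) (umax i))
    -- (iv) relative disturbances lie in W̃_i
    (hdist : ∀ i, 1 ≤ i → i ≤ N →
      ∀ w0x ∈ Set.Icc (wxmin 0) (wxmax 0), ∀ w0v ∈ Set.Icc (wvmin 0) (wvmax 0),
      ∀ wix ∈ Set.Icc (wxmin i) (wxmax i), ∀ wiv ∈ Set.Icc (wvmin i) (wvmax i),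
      (w0x - wix, w0v - wiv) ∈ Wt i)
    -- closed-loop trajectories
    (xt vt : ℕ → ℕ → ℝ) (v₀ : ℕ → ℝ) (u : ℕ → ℕ → ℝ) (wx wv : ℕ → ℕ → ℝ)
    (hx0 : ∀ k, xt k 0 = 0)
    -- admissible actual disturbances
    (hwx : ∀ k, ∀ i ≤ N, wx k i ∈ Set.Icc (wxmin i) (wxmax i))
    (hwv : ∀ k, ∀ i ≤ N, wv k i ∈ Set.Icc (wvmin i) (wvmax i))
    -- the distributed policy
    (hu0 : ∀ k, u k 0 = μ₀ (v₀ k))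
    (hui : ∀ k, ∀ i, 1 ≤ i → i ≤ N → u k i = u k 0 - μ i (xt k i, vt k i))
    -- relative dynamics
    (hdynx : ∀ k, ∀ i, 1 ≤ i → i ≤ N → xt (k + 1) i =
      xt k i + vt k i * Δτ + (u k 0 - u k i) * Δτ ^ 2 / 2 + wx k 0 - wx k i)
    (hdynv : ∀ k, ∀ i, 1 ≤ i → i ≤ N → vt (k + 1) i =
      vt k i + (u k 0 - u k i) * Δτ + wv k 0 - wv k i)
    (hdyn0 : ∀ k, v₀ (k + 1) = v₀ k + u k 0 * Δτ + wv k 0)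
    -- initial conditions
    (hinit : ∀ i, 1 ≤ i → i ≤ N → (xt 0 i, vt 0 i) ∈ Ω i)
    (hinit0 : v₀ 0 ∈ Ω₀) :
    ∀ k, (∀ i ≤ N, u k i ∈ Set.Icc (umin i) (umax i)) ∧
      (∀ i, 1 ≤ i → i ≤ N → xt k i - xt k (i - 1) ≥ l) ∧
      xt k N ≤ L ∧ v₀ k ∈ Set.Icc v0min v0max := by
  have hleader : ∀ k, v₀ k ∈ Ω₀ :=
    mem_of_robustInvariant hinv₀ (fun k ↦ hwv k 0 N.zero_le) (fun k ↦ by rw [hdyn0, hu0]) hinit0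
  have hfollower : ∀ i, 1 ≤ i → i ≤ N → ∀ k, (xt k i, vt k i) ∈ Ω i := by
    intro i h1 h2
    refine mem_of_robustInvariant (hinv i h1 h2)
      (fun k ↦ hdist i h1 h2 _ (hwx k 0 N.zero_le) _ (hwv k 0 N.zero_le) _ (hwx k i h2) _
        (hwv k i h2)) (fun k ↦ ?_) (hinit i h1 h2)
    have hrel : u k 0 - u k i = μ i (xt k i, vt k i) := by rw [hui k i h1 h2]; ring
    rw [hdynx k i h1 h2, hdynv k i h1 h2, hrel]
    ext <;> dsimp only <;> ring
  have hupper : ∀ k, ∀ i ≤ N, xt k i ≤ envelopeUpper N l L i := by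
    intro k i hi
    rcases Nat.eq_zero_or_pos i with rfl | hpos
    · simp [hx0]
    · exact (henv i hpos hi (hfollower i hpos hi k)).2
  intro k
  refine ⟨fun i hi ↦ ?_, fun i h1 h2 ↦ ?_, ?_, hΩ₀S (hleader k)⟩
  · have hμ₀ : u k 0 ∈ U₀ := hu0 k ▸ hμ₀U _ (hleader k)
    rcases Nat.eq_zero_or_pos i with rfl | hpos
    · exact hU₀ hμ₀
    · rw [hui k i hpos hi]
      exact hctr _ hμ₀ i hpos hi _ (hμU i hpos hi _ (hfollower i hpos hi k))
  · obtain ⟨j, rfl⟩ := Nat.exists_eq_add_of_le' h1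
    have hlower : envelopeLower N l L (j + 1) ≤ xt k (j + 1) :=
      (henv _ h1 h2 (hfollower _ h1 h2 k)).1
    rw [envelopeLower_succ] at hlower
    have := hupper k j (by omega)
    simp only [Nat.add_sub_cancel]
    linarith
  · simpa [envelopeUpper_self (by omega : N ≠ 0)] using hupper k N le_rfl

/-- Correctness of the distributed platoon control policy.
Given per-vehicle robust control invariant sets inside the position envelopes
(for the followers, in leader-relative coordinates) and a speed-range-invariant
set for the leader, with under-approximated relative controls (iii) and
over-approximated relative disturbances (iv), the closed loop under the
distributed policy `u₀ = μ₀(v₀)`, `u_i = u₀ - μ_i(x̃_i, ṽ_i)` satisfies for all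
times the input bounds, the inter-vehicle spacings `x̃_i - x̃_{i-1} ≥ l`, the
platoon-length bound `x̃_N ≤ L`, and the platoon-velocity range. -/
theorem stmt_10
    (N : ℕ) (hN : 1 ≤ N) (l : ℝ) (hl : 0 < l) (Δτ : ℝ) (hΔτ : 0 < Δτ) (L : ℝ)
    (umin umax wxmin wxmax wvmin wvmax : ℕ → ℝ)
    (v0min v0max : ℝ)
    -- invariant sets and policies
    (Ω : ℕ → Set (ℝ × ℝ)) (μ : ℕ → ℝ × ℝ → ℝ)
    (Ut : ℕ → Set ℝ)      -- relative control sets Ũ_i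
    (Wt : ℕ → Set (ℝ × ℝ)) -- relative disturbance rectangles W̃_i
    (Ω₀ : Set ℝ) (μ₀ : ℝ → ℝ) (U₀ : Set ℝ)
    -- (i) follower invariance within the envelopes
    (henv : ∀ i, 1 ≤ i → i ≤ N → Ω i ⊆
      {s : ℝ × ℝ | (i : ℝ) * l + ((i : ℝ) - 1) * (L - N * l) / N ≤ s.1 ∧
        s.1 ≤ (i : ℝ) * l + (i : ℝ) * (L - N * l) / N})
    (hμU : ∀ i, 1 ≤ i → i ≤ N → ∀ s ∈ Ω i, μ i s ∈ Ut i)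
    (hinv : ∀ i, 1 ≤ i → i ≤ N → ∀ s ∈ Ω i, ∀ wt ∈ Wt i,
      (s.1 + s.2 * Δτ + μ i s * Δτ ^ 2 / 2 + wt.1,
       s.2 + μ i s * Δτ + wt.2) ∈ Ω i)
    -- (ii) leader invariance within the speed range
    (hΩ₀S : Ω₀ ⊆ Set.Icc v0min v0max)
    (hU₀ : U₀ ⊆ Set.Icc (umin 0) (umax 0))
    (hμ₀U : ∀ v ∈ Ω₀, μ₀ v ∈ U₀)
    (hinv₀ : ∀ v ∈ Ω₀, ∀ w ∈ Set.Icc (wvmin 0) (wvmax 0),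
      v + μ₀ v * Δτ + w ∈ Ω₀)
    -- (iii) actual inputs of the followers are admissible
    (hctr : ∀ u₀ ∈ U₀, ∀ i, 1 ≤ i → i ≤ N → ∀ ut ∈ Ut i,
      u₀ - ut ∈ Set.Icc (umin i) (umax i))
    -- (iv) relative disturbances lie in W̃_i
    (hdist : ∀ i, 1 ≤ i → i ≤ N →
      ∀ w0x ∈ Set.Icc (wxmin 0) (wxmax 0), ∀ w0v ∈ Set.Icc (wvmin 0) (wvmax 0),
      ∀ wix ∈ Set.Icc (wxmin i) (wxmax i), ∀ wiv ∈ Set.Icc (wvmin i) (wvmax i),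
      (w0x - wix, w0v - wiv) ∈ Wt i)
    -- closed-loop trajectories
    (xt vt : ℕ → ℕ → ℝ) (v₀ : ℕ → ℝ) (u : ℕ → ℕ → ℝ) (wx wv : ℕ → ℕ → ℝ)
    (hx0 : ∀ k, xt k 0 = 0)
    -- admissible actual disturbances
    (hwx : ∀ k, ∀ i ≤ N, wx k i ∈ Set.Icc (wxmin i) (wxmax i))
    (hwv : ∀ k, ∀ i ≤ N, wv k i ∈ Set.Icc (wvmin i) (wvmax i))
    -- the distributed policy
    (hu0 : ∀ k, u k 0 = μ₀ (v₀ k))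
    (hui : ∀ k, ∀ i, 1 ≤ i → i ≤ N → u k i = u k 0 - μ i (xt k i, vt k i))
    -- relative dynamics
    (hdynx : ∀ k, ∀ i, 1 ≤ i → i ≤ N → xt (k + 1) i =
      xt k i + vt k i * Δτ + (u k 0 - u k i) * Δτ ^ 2 / 2 + wx k 0 - wx k i)
    (hdynv : ∀ k, ∀ i, 1 ≤ i → i ≤ N → vt (k + 1) i =
      vt k i + (u k 0 - u k i) * Δτ + wv k 0 - wv k i)
    (hdyn0 : ∀ k, v₀ (k + 1) = v₀ k + u k 0 * Δτ + wv k 0)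
    -- initial conditions
    (hinit : ∀ i, 1 ≤ i → i ≤ N → (xt 0 i, vt 0 i) ∈ Ω i)
    (hinit0 : v₀ 0 ∈ Ω₀) :
    ∀ k, (∀ i ≤ N, u k i ∈ Set.Icc (umin i) (umax i)) ∧
      (∀ i, 1 ≤ i → i ≤ N → xt k i - xt k (i - 1) ≥ l) ∧
      xt k N ≤ L ∧ v₀ k ∈ Set.Icc v0min v0max :=
  stmt_10_general N hN l Δτ L umin umax wxmin wxmax wvmin wvmax v0min v0max Ω μ Ut Wt Ω₀ μ₀ U₀ henv
    hμU hinv hΩ₀S hU₀ hμ₀U hinv₀ hctr hdist xt vt v₀ u wx wv hx0 hwx hwv hu0 hui hdynx hdynv hdyn0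
    hinit hinit0
end
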